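/- arXiv:1904.13016 — 3 statements merged into one kernel-verified Lean document; each statement's English description precedes it below -/
import Mathlib

section
/- Matrix product trace estimate (Lemma A.2 d): Let H be a d×d real symmetric matrix with λ_H := λ_max(−H) > 0 whose sum of positive eigenvalues is at most D₄, and let η_{o+1}, …, η_n be positive numbers with η_i‖H‖ < 1/2 for all i. Define A_{j:k} := (I − η_{j+1}H)(I − η_{j+2}H)⋯(I − η_k H) (with A_{k:k} = I). Then Σ_{j=o+1}^{n} η_j · tr(A_{j:n} H A_{j:n}) ≤ −(1/4)(exp(λ_H η_{o+1:n}) − 1) + 2 η_{o+1:n} D₄, where η_{o+1:n} = Σ_{i=o+1}^{n} η_i. -/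
/-!
Since `A_{j:n}` is a polynomial in `H`, the trace `tr(A_{j:n} H A_{j:n})` equals
`∑_l evl ∏_{i ∈ (j, n]} (1 - η_i evl)²`, so the left-hand side splits into one scalar sum per
eigenvalue. An eigenvalue `λ` contributes at most `η_{o+1:n} · max λ 0`, because every factor
`(1 - η_i λ)²` lies in `[0, 1]` when `λ ≥ 0`. The eigenvalue `-evH` contributes
`-∑_j x_j Q_j` with `x_i = η_i evH ≤ 1/2` and `Q_j = ∏_{i ∈ (j, n]} (1 + x_i)²`; since
`Q_{j-1} - Q_j = (2 x_j + x_j²) Q_j ≤ 4 x_j Q_j`, telescoping gives `Q_o - 1 ≤ 4 ∑_j x_j Q_j`,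
and `exp x ≤ (1 + x)²` on `[0, 1]` gives `exp(evH η_{o+1:n}) ≤ Q_o`.
-/

open Matrix

/-- The matrix product `A_{j:k} = (I − η_{j+1}H)(I − η_{j+2}H)⋯(I − η_k H)`
(with `A_{k:k} = I`); all factors are polynomials in `H`, hence commute. -/
noncomputable def AprodM {d : ℕ} (H : Matrix (Fin d) (Fin d) ℝ) (η : ℕ → ℝ) (j k : ℕ) :
    Matrix (Fin d) (Fin d) ℝ :=
  ((List.range (k - j)).map fun i => (1 : Matrix (Fin d) (Fin d) ℝ) - η (j + 1 + i) • H).prod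

open Finset Polynomial

theorem Matrix.IsHermitian.trace_cfc {𝕜 n : Type*} [RCLike 𝕜] [Fintype n] [DecidableEq n]
    {A : Matrix n n 𝕜} (hA : A.IsHermitian) (f : ℝ → ℝ) :
    (cfc f A).trace = ∑ i, (f (hA.eigenvalues i) : 𝕜) := by
  rw [hA.cfc_eq, IsHermitian.cfc, Unitary.conjStarAlgAut_apply, trace_mul_cycle,
    hA.eigenvectorUnitary.2.1, one_mul, trace_diagonal]
  rfl

theorem Matrix.IsHermitian.trace_aeval {𝕜 n : Type*} [RCLike 𝕜] [Fintype n] [DecidableEq n]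
    {A : Matrix n n 𝕜} (hA : A.IsHermitian) (q : ℝ[X]) :
    (aeval A q).trace = ∑ i, ((q.eval (hA.eigenvalues i) : ℝ) : 𝕜) := by
  rw [← cfc_polynomial q A hA.isSelfAdjoint, hA.trace_cfc]

theorem AprodM_eq_aeval {d : ℕ} (H : Matrix (Fin d) (Fin d) ℝ) (η : ℕ → ℝ) (j k : ℕ) :
    AprodM H η j k = aeval H (∏ i ∈ Ioc j k, (1 - C (η i) * X)) := by
  rw [← Icc_add_one_left_eq_Ioc, ← Ico_add_one_right_eq_Icc, prod_Ico_eq_prod_range,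
    prod_eq_multiset_prod, range_val, Multiset.range, Multiset.map_coe, Multiset.prod_coe,
    map_list_prod, List.map_map, AprodM, show k + 1 - (j + 1) = k - j by omega]
  simp [Function.comp_def, Algebra.smul_def]

theorem trace_AprodM_mul_mul_AprodM {d : ℕ} {H : Matrix (Fin d) (Fin d) ℝ} (hH : H.IsHermitian)
    (η : ℕ → ℝ) (j k : ℕ) :
    (AprodM H η j k * H * AprodM H η j k).trace =
      ∑ l, hH.eigenvalues l * (∏ i ∈ Ioc j k, (1 - η i * hH.eigenvalues l)) ^ 2 := by
  have hsandwich (p : ℝ[X]) : aeval H p * H * aeval H p = aeval H (p * X * p) := by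
    rw [map_mul, map_mul, aeval_X]
  rw [AprodM_eq_aeval, hsandwich, hH.trace_aeval]
  simp only [eval_mul, eval_prod, eval_sub, eval_one, eval_C, eval_X, RCLike.ofReal_real_eq_id, id]
  congr! 1 with l
  ring

theorem mul_prod_one_sub_sq_le_max {ι : Type*} {s : Finset ι} {η : ι → ℝ} {x : ℝ}
    (hη : ∀ i ∈ s, 0 ≤ η i) (hηx : ∀ i ∈ s, η i * x ≤ 2) :
    x * (∏ i ∈ s, (1 - η i * x)) ^ 2 ≤ max x 0 := by
  rcases le_or_gt x 0 with hx | hx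
  · exact (mul_nonpos_of_nonpos_of_nonneg hx (sq_nonneg _)).trans (le_max_right _ _)
  · have hprod : (∏ i ∈ s, (1 - η i * x)) ^ 2 ≤ 1 := by
      rw [← prod_pow]
      refine prod_le_one (fun i _ => sq_nonneg _) fun i hi => ?_
      have := mul_nonneg (hη i hi) hx.le
      nlinarith [hηx i hi]
    calc x * (∏ i ∈ s, (1 - η i * x)) ^ 2 ≤ x := mul_le_of_le_one_right hx.le hprod
      _ ≤ max x 0 := le_max_left _ _

theorem sum_mul_mul_prod_sq_le (η : ℕ → ℝ) (o n : ℕ) {x : ℝ}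
    (hη : ∀ i ∈ Ioc o n, 0 ≤ η i) (hηx : ∀ i ∈ Ioc o n, η i * x ≤ 2) :
    ∑ j ∈ Ioc o n, η j * (x * (∏ i ∈ Ioc j n, (1 - η i * x)) ^ 2) ≤
      (∑ i ∈ Ioc o n, η i) * max x 0 := by
  rw [sum_mul]
  refine sum_le_sum fun j hj => mul_le_mul_of_nonneg_left ?_ (hη j hj)
  have hsub : Ioc j n ⊆ Ioc o n := Ioc_subset_Ioc_left (mem_Ioc.1 hj).1.le
  exact mul_prod_one_sub_sq_le_max (fun i hi => hη i (hsub hi)) fun i hi => hηx i (hsub hi)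

theorem Real.exp_le_one_add_sq {x : ℝ} (hx₀ : 0 ≤ x) (hx₁ : x ≤ 1) :
    Real.exp x ≤ (1 + x) ^ 2 := by
  have half : Real.exp (x / 2) ≤ 1 + x := calc
    Real.exp (x / 2) ≤ 1 / (1 - x / 2) :=
      Real.exp_bound_div_one_sub_of_interval (by linarith) (by linarith)
    _ ≤ 1 + x := by rw [div_le_iff₀ (by linarith)]; nlinarith
  calc Real.exp x = Real.exp (x / 2) ^ 2 := by rw [← Real.exp_nat_mul]; ring_nf
    _ ≤ (1 + x) ^ 2 := pow_le_pow_left₀ (Real.exp_pos _).le half 2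

theorem Real.exp_sum_le_prod_one_add_sq {ι : Type*} (s : Finset ι) (x : ι → ℝ)
    (hx₀ : ∀ i ∈ s, 0 ≤ x i) (hx₁ : ∀ i ∈ s, x i ≤ 1) :
    Real.exp (∑ i ∈ s, x i) ≤ ∏ i ∈ s, (1 + x i) ^ 2 := by
  rw [Real.exp_sum]
  exact prod_le_prod (fun i _ => (Real.exp_pos _).le)
    fun i hi => Real.exp_le_one_add_sq (hx₀ i hi) (hx₁ i hi)

theorem prod_one_add_sq_sub_one_le_four_mul_sum (x : ℕ → ℝ) (o n : ℕ)
    (hx₀ : ∀ i ∈ Ioc o n, 0 ≤ x i) (hx₂ : ∀ i ∈ Ioc o n, x i ≤ 2) :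
    ∏ i ∈ Ioc o n, (1 + x i) ^ 2 - 1 ≤
      4 * ∑ j ∈ Ioc o n, x j * ∏ i ∈ Ioc j n, (1 + x i) ^ 2 := by
  rcases lt_or_ge n o with hno | hon
  · simp [Ioc_eq_empty_of_le hno.le]
  induction hon using Nat.decreasingInduction with
  | self => simp
  | of_succ k hk ih =>
    rw [← insert_Ioc_add_one_left_eq_Ioc hk] at hx₀ hx₂ ⊢
    have hk' : k + 1 ∉ Ioc (k + 1) n := by simp
    rw [prod_insert hk', sum_insert hk']
    have ih := ih (fun i hi => hx₀ i (mem_insert_of_mem hi))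
      (fun i hi => hx₂ i (mem_insert_of_mem hi))
    have hQ : 0 ≤ ∏ i ∈ Ioc (k + 1) n, (1 + x i) ^ 2 := prod_nonneg fun i _ => sq_nonneg _
    have h₀ := hx₀ _ (mem_insert_self _ _)
    have h₂ := hx₂ _ (mem_insert_self _ _)
    nlinarith [mul_nonneg (mul_nonneg h₀ (sub_nonneg.2 h₂)) hQ]

theorem sum_mul_neg_mul_prod_sq_le (η : ℕ → ℝ) (o n : ℕ) {a : ℝ} (ha : 0 ≤ a)
    (hη₀ : ∀ i ∈ Ioc o n, 0 ≤ η i) (hη₁ : ∀ i ∈ Ioc o n, η i * a ≤ 1) :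
    ∑ j ∈ Ioc o n, η j * (-a * (∏ i ∈ Ioc j n, (1 - η i * -a)) ^ 2) ≤
      -(1 / 4) * (Real.exp (a * ∑ i ∈ Ioc o n, η i) - 1) := by
  have hx₀ (i) (hi : i ∈ Ioc o n) : 0 ≤ η i * a := mul_nonneg (hη₀ i hi) ha
  have hexp := Real.exp_sum_le_prod_one_add_sq _ _ hx₀ hη₁
  have htel := prod_one_add_sq_sub_one_le_four_mul_sum (fun i => η i * a) o n hx₀
    fun i hi => (hη₁ i hi).trans one_le_two
  have hlhs : ∑ j ∈ Ioc o n, η j * (-a * (∏ i ∈ Ioc j n, (1 - η i * -a)) ^ 2) =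
      -∑ j ∈ Ioc o n, η j * a * ∏ i ∈ Ioc j n, (1 + η i * a) ^ 2 := by
    rw [← sum_neg_distrib]
    refine sum_congr rfl fun j _ => ?_
    rw [← prod_pow]
    simp only [mul_neg, sub_neg_eq_add]
    ring
  rw [hlhs, mul_comm a, sum_mul]
  linarith

theorem Finset.sum_le_apply_add_sum {ι M : Type*} [Fintype ι] [DecidableEq ι] [AddCommMonoid M]
    [PartialOrder M] [IsOrderedAddMonoid M] {f g : ι → M} (i₀ : ι) (hfg : ∀ i, f i ≤ g i)
    (hg : ∀ i, 0 ≤ g i) : ∑ i, f i ≤ f i₀ + ∑ i, g i := by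
  rw [← add_sum_erase univ f (mem_univ i₀)]
  gcongr
  exact (sum_le_sum fun i _ => hfg i).trans <|
    sum_le_sum_of_subset_of_nonneg (erase_subset _ _) fun i _ _ => hg i

theorem matrix_prod_trace_estimate_general
    (d : ℕ) (H : Matrix (Fin d) (Fin d) ℝ) (hH : H.IsHermitian)
    (lamH D₄ : ℝ)
    (hlamH : IsGreatest (Set.range fun i => -hH.eigenvalues i) lamH) (hlamHpos : 0 < lamH)
    (hD₄ : ∑ i, max (hH.eigenvalues i) 0 ≤ D₄)
    (η : ℕ → ℝ) (o n : ℕ)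
    (hηpos : ∀ i ∈ Finset.Icc (o + 1) n, 0 < η i)
    -- `η_i ‖H‖ < 1/2`, where `‖H‖ = max_k |λ_k(H)|` is the spectral norm
    (hηH : ∀ i ∈ Finset.Icc (o + 1) n, ∀ k, η i * |hH.eigenvalues k| < 1 / 2) :
    ∑ j ∈ Finset.Icc (o + 1) n,
        η j * Matrix.trace (AprodM H η j n * H * AprodM H η j n)
      ≤ -(1 / 4) * (Real.exp (lamH * ∑ i ∈ Finset.Icc (o + 1) n, η i) - 1)
        + 2 * (∑ i ∈ Finset.Icc (o + 1) n, η i) * D₄ := by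
  simp only [Icc_add_one_left_eq_Ioc] at hηpos hηH ⊢
  set ev := hH.eigenvalues
  set S := ∑ i ∈ Ioc o n, η i
  set F : ℝ → ℝ := fun x => ∑ j ∈ Ioc o n, η j * (x * (∏ i ∈ Ioc j n, (1 - η i * x)) ^ 2)
  have hη₀ (i) (hi : i ∈ Ioc o n) : 0 ≤ η i := (hηpos i hi).le
  have htrace : ∑ j ∈ Ioc o n, η j * (AprodM H η j n * H * AprodM H η j n).trace =
      ∑ l, F (ev l) := by
    simp only [F, trace_AprodM_mul_mul_AprodM hH, mul_sum]
    exact sum_comm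
  have hF (l) : F (ev l) ≤ S * max (ev l) 0 :=
    sum_mul_mul_prod_sq_le η o n hη₀ fun i hi => by
      linarith [hηH i hi l, mul_le_mul_of_nonneg_left (le_abs_self (ev l)) (hη₀ i hi)]
  obtain ⟨l₀, hl₀ : -ev l₀ = lamH⟩ := hlamH.1
  have hev₀ : ev l₀ = -lamH := by linarith
  have hFl₀ : F (ev l₀) ≤ -(1 / 4) * (Real.exp (lamH * S) - 1) := by
    refine hev₀ ▸ sum_mul_neg_mul_prod_sq_le η o n hlamHpos.le hη₀ fun i hi => ?_
    have := hηH i hi l₀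
    rw [hev₀, abs_neg, abs_of_pos hlamHpos] at this
    linarith
  have hS : 0 ≤ S := sum_nonneg hη₀
  have hD₄nonneg : 0 ≤ D₄ := (sum_nonneg fun i _ => le_max_right _ _).trans hD₄
  calc ∑ j ∈ Ioc o n, η j * (AprodM H η j n * H * AprodM H η j n).trace
      = ∑ l, F (ev l) := htrace
    _ ≤ F (ev l₀) + ∑ l, S * max (ev l) 0 :=
        sum_le_apply_add_sum l₀ hF fun l => mul_nonneg hS (le_max_right _ _)
    _ ≤ -(1 / 4) * (Real.exp (lamH * S) - 1) + 2 * S * D₄ := by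
        rw [← mul_sum]
        nlinarith [mul_le_mul_of_nonneg_left hD₄ hS, mul_nonneg hS hD₄nonneg]

/-- Matrix product trace estimate (Lemma A.2 d): if `H` is real symmetric with
`λ_H = λ_max(−H) > 0`, the sum of the positive eigenvalues of `H` is at most `D₄`,
and `η_i‖H‖ < 1/2`, then
`Σ_{j=o+1}^n η_j tr(A_{j:n} H A_{j:n}) ≤ −(1/4)(exp(λ_H η_{o+1:n}) − 1) + 2η_{o+1:n}D₄`. -/
theorem matrix_prod_trace_estimate
    (d : ℕ) (hd : 0 < d) (H : Matrix (Fin d) (Fin d) ℝ) (hH : H.IsHermitian)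
    (lamH D₄ : ℝ)
    (hlamH : IsGreatest (Set.range fun i => -hH.eigenvalues i) lamH) (hlamHpos : 0 < lamH)
    (hD₄ : ∑ i, max (hH.eigenvalues i) 0 ≤ D₄)
    (η : ℕ → ℝ) (o n : ℕ) (hon : o < n)
    (hηpos : ∀ i ∈ Finset.Icc (o + 1) n, 0 < η i)
    -- `η_i ‖H‖ < 1/2`, where `‖H‖ = max_k |λ_k(H)|` is the spectral norm
    (hηH : ∀ i ∈ Finset.Icc (o + 1) n, ∀ k, η i * |hH.eigenvalues k| < 1 / 2) :
    ∑ j ∈ Finset.Icc (o + 1) n,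
        η j * Matrix.trace (AprodM H η j n * H * AprodM H η j n)
      ≤ -(1 / 4) * (Real.exp (lamH * ∑ i ∈ Finset.Icc (o + 1) n, η i) - 1)
        + 2 * (∑ i ∈ Finset.Icc (o + 1) n, η i) * D₄ :=
  matrix_prod_trace_estimate_general d H hH lamH D₄ hlamH hlamHpos hD₄ η o n hηpos hηH
end

section
/- Matrix product combined estimate (Lemma A.2 e): Let H be a d×d real symmetric matrix with λ_H := λ_max(−H) > 0 whose sum of positive eigenvalues is at most D₄, and let η_{o+1}, …, η_n be positive numbers with η_i‖H‖ < 1/2 and η_i ≤ η_o ≤ δ₀² for all i ∈ {o+1, …, n}, for some δ₀ > 0 and η_o > 0. Define A_{j:k} := (I − η_{j+1}H)⋯(I − η_k H) (with A_{k:k} = I). If η_{o+1:n} := Σ_{i=o+1}^{n} η_i ≥ (2/λ_H) log((16D₄ + 40)/λ_H), then Σ_{j=o+1}^{n} [δ₀² η_j · tr(A_{j:n} H A_{j:n}) + η_j² · λ_max(A_{j:n} H A_{j:n})] ≤ −4 δ₀² η_{o+1:n}. -/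
/-!
Diagonalise `H`. By the functional calculus, `A_{j:n} H A_{j:n}` has the eigenvalues
`μ ∏_{i>j} (1 - η_i μ)²` for the eigenvalues `μ` of `H`. Since `η_i ‖H‖ < 1/2`, a positive `μ` is
only contracted, while `μ = -λ_H` is pushed down to at most `-λ_H e^{λ_H η_{j+1:n}}` because
`e^x ≤ (1 + x)²` on `[0, 1/2]`. Hence `tr(A_{j:n} H A_{j:n}) ≤ D₄ - λ_H e^{λ_H η_{j+1:n}}` and
`λ_max(A_{j:n} H A_{j:n}) ≤ D₄`, and with `η_j ≤ δ₀²` the claim reduces to the scalar inequality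
`(2D₄ + 4) η_{o+1:n} ≤ λ_H Σ_j η_j e^{λ_H η_{j+1:n}}`. This is trivial when `λ_H ≥ 2D₄ + 4`.
Otherwise the right side is a Riemann sum of `∫ e^{λ_H t}` with mesh at most `1/(2λ_H)`, so by
telescoping it is at least `e^{-1/2} (e^{λ_H η_{o+1:n}} - 1)`, and the lower bound on
`η_{o+1:n}` makes this exponential large.
-/

open Matrix

open Real Finset

theorem Real.exp_le_one_add_sq_s9 {x : ℝ} (hx0 : 0 ≤ x) (hx : x ≤ 1 / 2) : exp x ≤ (1 + x) ^ 2 := by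
  have hdiv : 1 / (1 - x) ≤ (1 + x) ^ 2 := by
    rw [div_le_iff₀ (by linarith)]
    nlinarith [mul_nonneg hx0 hx0]
  exact (exp_bound_div_one_sub_of_interval hx0 (by linarith)).trans hdiv

theorem Real.exp_half_le_two : exp (1 / 2) ≤ 2 := by
  have := exp_bound_div_one_sub_of_interval (x := 1 / 2) (by norm_num) (by norm_num)
  norm_num at this ⊢
  exact this

theorem Real.exp_sub_one_le_mul_exp (x : ℝ) : exp x - 1 ≤ x * exp x := by
  have := mul_le_mul_of_nonneg_left (one_sub_le_exp_neg x) (exp_pos x).le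
  rw [← exp_add, add_neg_cancel, exp_zero] at this
  linarith

theorem Real.mul_one_add_half_le_exp {R y : ℝ} (hR : 0 < R) (hy : 2 * log R ≤ y) :
    R * (1 + y / 2) ≤ exp y := by
  have hR' : R ≤ exp (y / 2) := by
    rw [← exp_log hR]; exact exp_le_exp.2 (by linarith)
  have hlin : 1 + y / 2 ≤ exp (y / 2) := by linarith [add_one_le_exp (y / 2)]
  calc R * (1 + y / 2) ≤ exp (y / 2) * exp (y / 2) := by
        rcases le_or_gt 0 (1 + y / 2) with h | h
        · exact mul_le_mul hR' hlin h (exp_pos _).le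
        · nlinarith [exp_pos (y / 2)]
    _ = exp y := by rw [← exp_add, add_halves]

theorem Real.exp_sum_le_sq_prod_one_add {ι : Type*} {s : Finset ι} {x : ι → ℝ}
    (h0 : ∀ i ∈ s, 0 ≤ x i) (h1 : ∀ i ∈ s, x i ≤ 1 / 2) :
    exp (∑ i ∈ s, x i) ≤ (∏ i ∈ s, (1 + x i)) ^ 2 := by
  rw [exp_sum, ← prod_pow]
  exact prod_le_prod (fun i _ => (exp_pos _).le) fun i hi => exp_le_one_add_sq_s9 (h0 i hi) (h1 i hi)

theorem mul_sq_prod_one_sub_mul_le_max {ι : Type*} {s : Finset ι} {η : ι → ℝ} {μ : ℝ}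
    (h0 : ∀ i ∈ s, 0 ≤ η i) (h1 : ∀ i ∈ s, η i * μ ≤ 1) :
    μ * (∏ i ∈ s, (1 - η i * μ)) ^ 2 ≤ max μ 0 := by
  rcases le_or_gt μ 0 with hμ | hμ
  · exact (mul_nonpos_of_nonpos_of_nonneg hμ (sq_nonneg _)).trans (le_max_right _ _)
  have hprod0 : 0 ≤ ∏ i ∈ s, (1 - η i * μ) := prod_nonneg fun i hi => by linarith [h1 i hi]
  have hprod1 : ∏ i ∈ s, (1 - η i * μ) ≤ 1 :=
    prod_le_one (fun i hi => by linarith [h1 i hi]) fun i hi => by nlinarith [h0 i hi]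
  calc μ * (∏ i ∈ s, (1 - η i * μ)) ^ 2 ≤ μ * 1 :=
        mul_le_mul_of_nonneg_left (pow_le_one₀ hprod0 hprod1) hμ.le
    _ ≤ max μ 0 := by rw [mul_one]; exact le_max_left _ _

theorem Real.exp_sum_Icc_sub_one_le {x : ℕ → ℝ} {c : ℝ} {o n : ℕ}
    (h0 : ∀ i ∈ Icc (o + 1) n, 0 ≤ x i) (hc : ∀ i ∈ Icc (o + 1) n, x i ≤ c) :
    exp (∑ i ∈ Icc (o + 1) n, x i) - 1
      ≤ exp c * ∑ j ∈ Icc (o + 1) n, x j * exp (∑ i ∈ Icc (j + 1) n, x i) := by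
  rcases lt_or_ge n o with hno | hon
  · simp [Icc_eq_empty_of_lt (by omega : n < o + 1)]
  set T : ℕ → ℝ := fun j => ∑ i ∈ Icc (j + 1) n, x i
  have hmem : ∀ j ∈ Ico o n, j + 1 ∈ Icc (o + 1) n := fun j hj => by
    simp only [mem_Ico, mem_Icc] at hj ⊢; omega
  have hT : ∀ j ∈ Ico o n, T j = x (j + 1) + T (j + 1) := fun j hj => by
    simp only [T]
    rw [Icc_add_one_left_eq_Ioc (j + 1) n]
    exact (add_sum_Ioc_eq_sum_Icc (mem_Icc.1 (hmem j hj)).2).symm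
  have hTn : T n = 0 := by simp [T]
  calc exp (T o) - 1 = exp (T o) - exp (T n) := by rw [hTn, exp_zero]
    _ = ∑ j ∈ Ico o n, (exp (x (j + 1)) - 1) * exp (T (j + 1)) := by
        rw [← neg_sub, ← sum_Ico_sub (fun j => exp (T j)) hon, ← sum_neg_distrib]
        refine sum_congr rfl fun j hj => ?_
        rw [hT j hj, exp_add]; ring
    _ ≤ ∑ j ∈ Ico o n, exp c * (x (j + 1) * exp (T (j + 1))) := by
        refine sum_le_sum fun j hj => ?_
        have hx0 := h0 _ (hmem j hj)
        calc (exp (x (j + 1)) - 1) * exp (T (j + 1))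
            ≤ (x (j + 1) * exp c) * exp (T (j + 1)) := by
              gcongr
              exact (exp_sub_one_le_mul_exp _).trans (by gcongr; exact hc _ (hmem j hj))
          _ = exp c * (x (j + 1) * exp (T (j + 1))) := by ring
    _ = exp c * ∑ j ∈ Icc (o + 1) n, x j * exp (T j) := by
        rw [← mul_sum, sum_Ico_add' (fun j => x j * exp (T j)), Ico_add_one_right_eq_Icc]

theorem mul_sum_le_mul_sum_mul_exp_tail {C lam : ℝ} {η : ℕ → ℝ} {o n : ℕ} (hlam : 0 < lam)
    (h0 : ∀ i ∈ Icc (o + 1) n, 0 ≤ η i) (h1 : ∀ i ∈ Icc (o + 1) n, η i * lam ≤ 1 / 2)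
    (hsum : 2 / lam * log ((8 * C + 8) / lam) ≤ ∑ i ∈ Icc (o + 1) n, η i) :
    C * ∑ i ∈ Icc (o + 1) n, η i
      ≤ lam * ∑ j ∈ Icc (o + 1) n, η j * exp (lam * ∑ i ∈ Icc (j + 1) n, η i) := by
  set S := ∑ i ∈ Icc (o + 1) n, η i
  set E := ∑ j ∈ Icc (o + 1) n, η j * exp (lam * ∑ i ∈ Icc (j + 1) n, η i)
  have hS0 : 0 ≤ S := sum_nonneg h0
  have hSE : S ≤ E := sum_le_sum fun j hj => by
    have : 0 ≤ lam * ∑ i ∈ Icc (j + 1) n, η i :=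
      mul_nonneg hlam.le (sum_nonneg fun i hi => h0 i (by simp only [mem_Icc] at hi hj ⊢; omega))
    nlinarith [h0 j hj, one_le_exp this]
  rcases le_or_gt C lam with hC | hC
  · exact (mul_le_mul_of_nonneg_right hC hS0).trans (mul_le_mul_of_nonneg_left hSE hlam.le)
  have htel : exp (lam * S) - 1 ≤ exp (1 / 2) * (lam * E) := by
    have := exp_sum_Icc_sub_one_le (x := fun i => lam * η i) (c := 1 / 2)
      (fun i hi => mul_nonneg hlam.le (h0 i hi)) fun i hi => by linarith [h1 i hi]
    simpa only [← mul_sum, mul_assoc, mul_left_comm (η _) lam] using this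
  have hR : (8 * C + 8) / lam * (1 + lam * S / 2) ≤ exp (lam * S) := by
    refine mul_one_add_half_le_exp (div_pos (by linarith) hlam) ?_
    have := mul_le_mul_of_nonneg_left hsum (by positivity : 0 ≤ lam)
    rwa [← mul_assoc, mul_div_cancel₀ _ hlam.ne'] at this
  have hR8 : 8 ≤ (8 * C + 8) / lam := by rw [le_div_iff₀ hlam]; linarith
  have hexpand : (8 * C + 8) / lam * (1 + lam * S / 2) = (8 * C + 8) / lam + (4 * C + 4) * S := by
    field_simp; ring
  have hE0 : 0 ≤ lam * E := mul_nonneg hlam.le (hS0.trans hSE)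
  nlinarith [exp_half_le_two, mul_nonneg (by linarith : 0 ≤ C) hS0]

namespace Matrix.IsHermitian

variable {ι : Type*} [Fintype ι] [DecidableEq ι] {H : Matrix ι ι ℝ}

theorem trace_cfc_s9 (hH : H.IsHermitian) (f : ℝ → ℝ) :
    (cfc f H).trace = ∑ k, f (hH.eigenvalues k) := by
  rw [hH.cfc_eq, IsHermitian.cfc, Unitary.conjStarAlgAut_apply, trace_mul_cycle,
    Unitary.coe_star_mul_self, one_mul, trace_diagonal]
  rfl

open scoped MatrixOrder in
theorem dotProduct_cfc_mulVec_le (hH : H.IsHermitian) {f : ℝ → ℝ} {B : ℝ}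
    (hf : ∀ k, f (hH.eigenvalues k) ≤ B) (v : ι → ℝ) :
    v ⬝ᵥ (cfc f H *ᵥ v) ≤ B * (v ⬝ᵥ v) := by
  rw [← sub_nonneg]
  have hle : cfc f H ≤ algebraMap ℝ _ B :=
    cfc_le_algebraMap f B H
      (by rw [hH.spectrum_real_eq_range_eigenvalues]; rintro _ ⟨k, rfl⟩; exact hf k)
      ((hH.spectrum_real_eq_range_eigenvalues ▸ Set.finite_range _).continuousOn _)
  simpa [sub_mulVec, Algebra.algebraMap_eq_smul_one, smul_mulVec] using
    (sub_nonneg.2 hle).posSemidef.dotProduct_mulVec_nonneg v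

end Matrix.IsHermitian

section AprodM

variable {d : ℕ} {H : Matrix (Fin d) (Fin d) ℝ}

theorem AprodM_eq_cfc (hH : H.IsHermitian) (η : ℕ → ℝ) (j k : ℕ) :
    AprodM H η j k = cfc (fun x => ∏ i ∈ Icc (j + 1) k, (1 - η i * x)) H := by
  have hH' : IsSelfAdjoint H := hH
  have hrange : ∀ x, ∏ i ∈ Icc (j + 1) k, (1 - η i * x)
      = ∏ i ∈ range (k - j), (1 - η (j + 1 + i) * x) := fun x => by
    rw [← Ico_add_one_right_eq_Icc, prod_Ico_eq_prod_range, Nat.add_sub_add_right]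
  simp only [hrange, AprodM]
  induction k - j with
  | zero => simp [cfc_const_one ℝ H]
  | succ m ih =>
    simp only [List.range_succ, List.map_append, List.prod_append, ih, prod_range_succ,
      List.map_cons, List.map_nil, List.prod_cons, List.prod_nil, mul_one]
    rw [cfc_mul _ _ H, cfc_sub _ _ H, cfc_const_one ℝ H, cfc_const_mul_id _ H]

theorem AprodM_mul_mul_AprodM_eq_cfc (hH : H.IsHermitian) (η : ℕ → ℝ) (j n : ℕ) :
    AprodM H η j n * H * AprodM H η j n
      = cfc (fun x => x * (∏ i ∈ Icc (j + 1) n, (1 - η i * x)) ^ 2) H := by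
  have hH' : IsSelfAdjoint H := hH
  nth_rw 2 [← cfc_id' ℝ H]
  rw [AprodM_eq_cfc hH, ← cfc_mul _ _ H, ← cfc_mul _ _ H]
  congr 1
  funext x
  ring

variable {η : ℕ → ℝ} {j n : ℕ}

theorem eigenvalues_mul_sq_prod_le_max (hH : H.IsHermitian) (h0 : ∀ i ∈ Icc (j + 1) n, 0 ≤ η i)
    (hηH : ∀ i ∈ Icc (j + 1) n, ∀ k, η i * |hH.eigenvalues k| ≤ 1 / 2) (k : Fin d) :
    hH.eigenvalues k * (∏ i ∈ Icc (j + 1) n, (1 - η i * hH.eigenvalues k)) ^ 2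
      ≤ max (hH.eigenvalues k) 0 :=
  mul_sq_prod_one_sub_mul_le_max h0 fun i hi => by
    nlinarith [hηH i hi k, mul_le_mul_of_nonneg_left (le_abs_self (hH.eigenvalues k)) (h0 i hi)]

theorem trace_AprodM_mul_mul_AprodM_le (hH : H.IsHermitian) (h0 : ∀ i ∈ Icc (j + 1) n, 0 ≤ η i)
    (hηH : ∀ i ∈ Icc (j + 1) n, ∀ k, η i * |hH.eigenvalues k| ≤ 1 / 2) {lam : ℝ} {k₀ : Fin d}
    (hk₀ : hH.eigenvalues k₀ = -lam) (hlam : 0 ≤ lam) :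
    (AprodM H η j n * H * AprodM H η j n).trace
      ≤ ∑ k, max (hH.eigenvalues k) 0 - lam * exp (lam * ∑ i ∈ Icc (j + 1) n, η i) := by
  have hexp : exp (lam * ∑ i ∈ Icc (j + 1) n, η i)
      ≤ (∏ i ∈ Icc (j + 1) n, (1 + η i * lam)) ^ 2 := by
    rw [mul_sum]
    refine (exp_le_exp.2 (le_of_eq (sum_congr rfl fun i _ => mul_comm _ _))).trans
      (exp_sum_le_sq_prod_one_add (fun i hi => mul_nonneg (h0 i hi) hlam) fun i hi => ?_)
    simpa [hk₀, abs_of_nonneg hlam] using hηH i hi k₀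
  have hk₀_term : hH.eigenvalues k₀ * (∏ i ∈ Icc (j + 1) n, (1 - η i * hH.eigenvalues k₀)) ^ 2
      ≤ -lam * exp (lam * ∑ i ∈ Icc (j + 1) n, η i) := by
    simp only [hk₀, mul_neg, sub_neg_eq_add, neg_mul]
    exact neg_le_neg (mul_le_mul_of_nonneg_left hexp hlam)
  rw [AprodM_mul_mul_AprodM_eq_cfc hH, hH.trace_cfc_s9, ← add_sum_erase _ _ (mem_univ k₀)]
  calc _ ≤ -lam * exp (lam * ∑ i ∈ Icc (j + 1) n, η i)
          + ∑ k ∈ univ.erase k₀, max (hH.eigenvalues k) 0 :=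
        add_le_add hk₀_term (sum_le_sum fun k _ => eigenvalues_mul_sq_prod_le_max hH h0 hηH k)
    _ ≤ _ := by
        have := sum_le_sum_of_subset_of_nonneg (erase_subset k₀ univ)
          fun k _ _ => le_max_right (hH.eigenvalues k) 0
        linarith

theorem dotProduct_AprodM_mul_mul_AprodM_mulVec_le (hH : H.IsHermitian)
    (h0 : ∀ i ∈ Icc (j + 1) n, 0 ≤ η i)
    (hηH : ∀ i ∈ Icc (j + 1) n, ∀ k, η i * |hH.eigenvalues k| ≤ 1 / 2)
    {v : Fin d → ℝ} (hv : ∑ i, v i ^ 2 = 1) :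
    v ⬝ᵥ ((AprodM H η j n * H * AprodM H η j n) *ᵥ v) ≤ ∑ k, max (hH.eigenvalues k) 0 := by
  have hvv : v ⬝ᵥ v = 1 := by simpa [dotProduct, sq] using hv
  rw [AprodM_mul_mul_AprodM_eq_cfc hH]
  refine (hH.dotProduct_cfc_mulVec_le (fun k => ?_) v).trans_eq (by rw [hvv, mul_one])
  exact (eigenvalues_mul_sq_prod_le_max hH h0 hηH k).trans
    (single_le_sum (f := fun k => max (hH.eigenvalues k) 0) (fun k _ => le_max_right _ _)
      (mem_univ k))

theorem combined_summand_le (hH : H.IsHermitian) (h0 : ∀ i ∈ Icc (j + 1) n, 0 ≤ η i)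
    (hηH : ∀ i ∈ Icc (j + 1) n, ∀ k, η i * |hH.eigenvalues k| ≤ 1 / 2) {lam : ℝ} {k₀ : Fin d}
    (hk₀ : hH.eigenvalues k₀ = -lam) (hlam : 0 ≤ lam) {D δ l : ℝ}
    (hD : ∑ k, max (hH.eigenvalues k) 0 ≤ D) (hηj : 0 ≤ η j) (hηδ : η j ≤ δ ^ 2)
    (hl : ∃ v : Fin d → ℝ, ∑ i, v i ^ 2 = 1 ∧
      l = v ⬝ᵥ ((AprodM H η j n * H * AprodM H η j n) *ᵥ v)) :
    δ ^ 2 * η j * (AprodM H η j n * H * AprodM H η j n).trace + η j ^ 2 * l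
      ≤ 2 * D * δ ^ 2 * η j - δ ^ 2 * lam * (η j * exp (lam * ∑ i ∈ Icc (j + 1) n, η i)) := by
  have hD0 : 0 ≤ D := (sum_nonneg fun k _ => le_max_right _ _).trans hD
  have htr := (trace_AprodM_mul_mul_AprodM_le hH h0 hηH hk₀ hlam).trans (sub_le_sub_right hD _)
  obtain ⟨v, hv, rfl⟩ := hl
  have hl := (dotProduct_AprodM_mul_mul_AprodM_mulVec_le hH h0 hηH hv).trans hD
  nlinarith [mul_le_mul_of_nonneg_left htr (mul_nonneg (sq_nonneg δ) hηj),
    mul_le_mul_of_nonneg_left hl (sq_nonneg (η j)),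
    mul_le_mul_of_nonneg_right (mul_le_mul_of_nonneg_right hηδ hηj) hD0]

end AprodM

theorem matrix_prod_combined_estimate_general
    (d : ℕ) (H : Matrix (Fin d) (Fin d) ℝ) (hH : H.IsHermitian)
    (lamH D₄ : ℝ)
    (hlamH : IsGreatest (Set.range fun i => -hH.eigenvalues i) lamH) (hlamHpos : 0 < lamH)
    (hD₄ : ∑ i, max (hH.eigenvalues i) 0 ≤ D₄)
    (η : ℕ → ℝ) (o n : ℕ)
    (δ₀ ηo : ℝ)
    (hηpos : ∀ i ∈ Finset.Icc (o + 1) n, 0 < η i)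
    -- `η_i ‖H‖ < 1/2`, where `‖H‖ = max_k |λ_k(H)|` is the spectral norm
    (hηH : ∀ i ∈ Finset.Icc (o + 1) n, ∀ k, η i * |hH.eigenvalues k| < 1 / 2)
    (hηstep : ∀ i ∈ Finset.Icc (o + 1) n, η i ≤ ηo) (hηoδ : ηo ≤ δ₀ ^ 2)
    (hsum : 2 / lamH * Real.log ((16 * D₄ + 40) / lamH) ≤ ∑ i ∈ Finset.Icc (o + 1) n, η i)
    -- `lmax j = λ_max(A_{j:n} H A_{j:n})`, via the Rayleigh-quotient characterization
    (lmax : ℕ → ℝ)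
    (hlmax : ∀ j ∈ Finset.Icc (o + 1) n,
      IsGreatest {x : ℝ | ∃ v : Fin d → ℝ, ∑ i, v i ^ 2 = 1 ∧
        x = v ⬝ᵥ ((AprodM H η j n * H * AprodM H η j n) *ᵥ v)} (lmax j)) :
    ∑ j ∈ Finset.Icc (o + 1) n,
        (δ₀ ^ 2 * η j * Matrix.trace (AprodM H η j n * H * AprodM H η j n)
          + η j ^ 2 * lmax j)
      ≤ -4 * δ₀ ^ 2 * ∑ i ∈ Finset.Icc (o + 1) n, η i := by
  obtain ⟨k₀, hk₀⟩ := hlamH.1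
  replace hk₀ : hH.eigenvalues k₀ = -lamH := by simp only at hk₀; linarith
  have hterm : ∀ j ∈ Icc (o + 1) n,
      δ₀ ^ 2 * η j * (AprodM H η j n * H * AprodM H η j n).trace + η j ^ 2 * lmax j
        ≤ 2 * D₄ * δ₀ ^ 2 * η j
          - δ₀ ^ 2 * lamH * (η j * exp (lamH * ∑ i ∈ Icc (j + 1) n, η i)) := fun j hj => by
    have htail : Icc (j + 1) n ⊆ Icc (o + 1) n := fun i hi => by
      simp only [mem_Icc] at hj hi ⊢; omega
    exact combined_summand_le hH (fun i hi => (hηpos i (htail hi)).le)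
      (fun i hi k => (hηH i (htail hi) k).le) hk₀ hlamHpos.le hD₄ (hηpos j hj).le
      ((hηstep j hj).trans hηoδ) (hlmax j hj).1
  have hkey := mul_sum_le_mul_sum_mul_exp_tail (C := 2 * D₄ + 4) hlamHpos
    (fun i hi => (hηpos i hi).le)
    (fun i hi => by simpa [abs_of_pos hlamHpos, hk₀] using (hηH i hi k₀).le)
    (by convert hsum using 4; ring)
  calc _ ≤ ∑ j ∈ Icc (o + 1) n, (2 * D₄ * δ₀ ^ 2 * η j
          - δ₀ ^ 2 * lamH * (η j * exp (lamH * ∑ i ∈ Icc (j + 1) n, η i))) := sum_le_sum hterm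
    _ = 2 * D₄ * δ₀ ^ 2 * ∑ j ∈ Icc (o + 1) n, η j - δ₀ ^ 2 * (lamH * ∑ j ∈ Icc (o + 1) n,
          η j * exp (lamH * ∑ i ∈ Icc (j + 1) n, η i)) := by
      rw [sum_sub_distrib, ← mul_sum, ← mul_sum]; ring
    _ ≤ _ := by nlinarith [mul_le_mul_of_nonneg_left hkey (sq_nonneg δ₀)]

/-- Matrix product combined estimate (Lemma A.2 e): if `H` is real symmetric with
`λ_H = λ_max(−H) > 0`, the sum of the positive eigenvalues of `H` is at most `D₄`,
`η_i‖H‖ < 1/2` and `η_i ≤ η_o ≤ δ₀²`, and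
`η_{o+1:n} ≥ (2/λ_H)log((16D₄+40)/λ_H)`, then
`Σ_{j=o+1}^n [δ₀²η_j tr(A_{j:n}HA_{j:n}) + η_j² λ_max(A_{j:n}HA_{j:n})] ≤ −4δ₀²η_{o+1:n}`.
Here `λ_max(A_{j:n}HA_{j:n})` is characterized as the largest Rayleigh quotient. -/
theorem matrix_prod_combined_estimate
    (d : ℕ) (hd : 0 < d) (H : Matrix (Fin d) (Fin d) ℝ) (hH : H.IsHermitian)
    (lamH D₄ : ℝ)
    (hlamH : IsGreatest (Set.range fun i => -hH.eigenvalues i) lamH) (hlamHpos : 0 < lamH)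
    (hD₄ : ∑ i, max (hH.eigenvalues i) 0 ≤ D₄)
    (η : ℕ → ℝ) (o n : ℕ) (hon : o < n)
    (δ₀ ηo : ℝ) (hδ₀ : 0 < δ₀) (hηo : 0 < ηo)
    (hηpos : ∀ i ∈ Finset.Icc (o + 1) n, 0 < η i)
    -- `η_i ‖H‖ < 1/2`, where `‖H‖ = max_k |λ_k(H)|` is the spectral norm
    (hηH : ∀ i ∈ Finset.Icc (o + 1) n, ∀ k, η i * |hH.eigenvalues k| < 1 / 2)
    (hηstep : ∀ i ∈ Finset.Icc (o + 1) n, η i ≤ ηo) (hηoδ : ηo ≤ δ₀ ^ 2)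
    (hsum : 2 / lamH * Real.log ((16 * D₄ + 40) / lamH) ≤ ∑ i ∈ Finset.Icc (o + 1) n, η i)
    -- `lmax j = λ_max(A_{j:n} H A_{j:n})`, via the Rayleigh-quotient characterization
    (lmax : ℕ → ℝ)
    (hlmax : ∀ j ∈ Finset.Icc (o + 1) n,
      IsGreatest {x : ℝ | ∃ v : Fin d → ℝ, ∑ i, v i ^ 2 = 1 ∧
        x = v ⬝ᵥ ((AprodM H η j n * H * AprodM H η j n) *ᵥ v)} (lmax j)) :
    ∑ j ∈ Finset.Icc (o + 1) n,
        (δ₀ ^ 2 * η j * Matrix.trace (AprodM H η j n * H * AprodM H η j n)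
          + η j ^ 2 * lmax j)
      ≤ -4 * δ₀ ^ 2 * ∑ i ∈ Finset.Icc (o + 1) n, η i :=
  matrix_prod_combined_estimate_general d H hH lamH D₄ hlamH hlamHpos hD₄ η o n δ₀ ηo hηpos hηH
    hηstep hηoδ hsum lmax hlmax
end

section
/- Limiting distributions of SGLD versus perturbed GD on a quadratic (Lemma 5.2): Let (η_n) be a sequence in (0,1) that decreases to 0 with Σ_{i=1}^{∞} η_i = ∞, let ζ_n be i.i.d. standard Gaussian N(0,1) random variables, and define X₀ = Y₀ = 0, X_n = (1 − η_n)X_{n−1} + √(η_n) ζ_n, Y_n = (1 − η_n)Y_{n−1} + η_n ζ_n. Then X_n converges in distribution to the Gaussian N(0, 1/2), and Y_n converges in distribution to the Dirac measure at 0. Equivalently, X_n and Y_n are centered Gaussians whose variances V_n^x and V_n^y satisfy V_n^x → 1/2 and V_n^y → 0 as n → ∞. -/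
open MeasureTheory ProbabilityTheory Real Filter Finset
open scoped Topology

/-!
Both iterates are linear in the independent Gaussians `ζ i`: the iterate `Z n` is measurable
with respect to `σ(ζ i : i ≤ n)`, hence independent of `ζ (n + 1)`, so by induction every
iterate is a centered Gaussian whose variance obeys the variance recursion.

For the limits, `e n = |V_n^x - 1/2|` and `e n = V_n^y` both satisfy
`e (n + 1) ≤ (1 - η) e n + η b` with `b → 0`. Once `b ≤ ε`, the excess `e n - ε` is
multiplied at each step by `1 - η ≤ exp (-η)`, and `∑ η = ∞` drives it to `0`.
-/

lemma le_mul_prod_Ico_of_le_mul {f c : ℕ → ℝ} {N : ℕ} (hc : ∀ n, 0 ≤ c n)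
    (h : ∀ n ≥ N, f (n + 1) ≤ c n * f n) : ∀ n ≥ N, f n ≤ f N * ∏ i ∈ Ico N n, c i := by
  intro n hn
  induction n, hn using Nat.le_induction with
  | base => simp
  | succ n hn ih =>
    rw [prod_Ico_succ_top hn, ← mul_assoc, mul_comm _ (c n)]
    exact (h n hn).trans (mul_le_mul_of_nonneg_left ih (hc n))

lemma prod_one_sub_le_exp_neg_sum {ι : Type*} (s : Finset ι) {a : ι → ℝ}
    (ha : ∀ i ∈ s, a i ≤ 1) : ∏ i ∈ s, (1 - a i) ≤ exp (-∑ i ∈ s, a i) := by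
  rw [← sum_neg_distrib, exp_sum]
  exact prod_le_prod (fun i hi => sub_nonneg.2 (ha i hi)) fun i _ => one_sub_le_exp_neg (a i)

theorem tendsto_zero_of_le_one_sub_mul_add {a b e : ℕ → ℝ} (ha0 : ∀ n, 0 ≤ a n)
    (ha1 : ∀ n, a n ≤ 1) (hsum : Tendsto (fun n => ∑ i ∈ range n, a i) atTop atTop)
    (hb : Tendsto b atTop (𝓝 0)) (he : ∀ n, 0 ≤ e n)
    (hrec : ∀ n, e (n + 1) ≤ (1 - a n) * e n + a n * b n) :
    Tendsto e atTop (𝓝 0) := by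
  refine tendsto_order.2 ⟨fun δ hδ => Eventually.of_forall fun n => hδ.trans_le (he n),
    fun δ hδ => ?_⟩
  obtain ⟨N, hbN⟩ := eventually_atTop.1 (hb.eventually (ge_mem_nhds (half_pos hδ)))
  have hshift : ∀ n ≥ N, e n - δ / 2 ≤ (e N - δ / 2) * ∏ i ∈ Ico N n, (1 - a i) :=
    le_mul_prod_Ico_of_le_mul (f := fun n => e n - δ / 2) (fun n => sub_nonneg.2 (ha1 n))
      fun n hn => by nlinarith [hrec n, hbN n hn, ha0 n]
  have htail : Tendsto (fun n => e N * exp (-∑ i ∈ Ico N n, a i)) atTop (𝓝 0) := by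
    have hIco : Tendsto (fun n => ∑ i ∈ Ico N n, a i) atTop atTop :=
      (tendsto_atTop_add_const_right _ (-∑ i ∈ range N, a i) hsum).congr'
        ((eventually_ge_atTop N).mono fun n hn => by
          simp only [sum_Ico_eq_sub _ hn, sub_eq_add_neg])
    simpa using (tendsto_exp_atBot.comp (tendsto_neg_atTop_atBot.comp hIco)).const_mul (e N)
  filter_upwards [htail.eventually (gt_mem_nhds (half_pos hδ)), eventually_ge_atTop N]
    with n hsmall hn
  have hprod := prod_one_sub_le_exp_neg_sum (Ico N n) (a := a) fun i _ => ha1 i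
  have hprod0 : 0 ≤ ∏ i ∈ Ico N n, (1 - a i) := prod_nonneg fun i _ => sub_nonneg.2 (ha1 i)
  nlinarith [hshift n hn, mul_le_mul_of_nonneg_left hprod (he N)]

section GaussianRecursion

variable {Ω : Type*} {ζ : ℕ → Ω → ℝ} {a c : ℕ → ℝ} {Z : ℕ → Ω → ℝ}

lemma measurable_iSup_comap_of_rec (hZ0 : ∀ ω, Z 0 ω = 0)
    (hZ : ∀ n ω, Z (n + 1) ω = a n * Z n ω + c n * ζ (n + 1) ω) (n : ℕ) :
    Measurable[⨆ i ∈ Set.Iic n, MeasurableSpace.comap (ζ i) inferInstance] (Z n) := by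
  induction n with
  | zero => simp [funext hZ0]
  | succ n ih =>
    rw [funext (hZ n)]
    refine (ih.mono ?_ le_rfl).const_mul _ |>.add ?_
    · exact biSup_mono fun i hi => Set.Iic_subset_Iic.2 n.le_succ hi
    · refine ((comap_measurable (ζ (n + 1))).mono ?_ le_rfl).const_mul _
      exact le_iSup₂ (f := fun i (_ : i ∈ Set.Iic (n + 1)) => MeasurableSpace.comap (ζ i) _)
        (n + 1) (Set.mem_Iic.2 le_rfl)

lemma indepFun_of_rec [MeasurableSpace Ω] {P : Measure Ω} (hζ : ∀ n, Measurable (ζ n))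
    (hind : iIndepFun ζ P) (hZ0 : ∀ ω, Z 0 ω = 0)
    (hZ : ∀ n ω, Z (n + 1) ω = a n * Z n ω + c n * ζ (n + 1) ω)
    (n : ℕ) : IndepFun (Z n) (ζ (n + 1)) P := by
  have h := indep_iSup_of_disjoint (fun i => (hζ i).comap_le) hind.iIndep
    (S := Set.Iic n) (T := {n + 1}) (by simp)
  rw [_root_.iSup_singleton] at h
  exact (IndepFun_iff_Indep _ _ _).2 <|
    indep_of_indep_of_le_left h (measurable_iSup_comap_of_rec hZ0 hZ n).comap_le

lemma nonneg_of_eq_sq_mul_add_sq {V : ℕ → ℝ} (hV0 : V 0 = 0)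
    (hV : ∀ n, V (n + 1) = a n ^ 2 * V n + c n ^ 2) (n : ℕ) : 0 ≤ V n := by
  induction n with
  | zero => exact hV0.ge
  | succ n ih => rw [hV]; positivity

theorem map_eq_gaussianReal_of_rec [MeasurableSpace Ω] {P : Measure Ω}
    [IsProbabilityMeasure P] (hζ : ∀ n, Measurable (ζ n))
    (hlaw : ∀ n, P.map (ζ n) = gaussianReal 0 1) (hind : iIndepFun ζ P)
    (hZ0 : ∀ ω, Z 0 ω = 0) (hZ : ∀ n ω, Z (n + 1) ω = a n * Z n ω + c n * ζ (n + 1) ω)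
    {V : ℕ → ℝ} (hV0 : V 0 = 0) (hV : ∀ n, V (n + 1) = a n ^ 2 * V n + c n ^ 2) (n : ℕ) :
    P.map (Z n) = gaussianReal 0 (V n).toNNReal := by
  induction n with
  | zero => simp [funext hZ0, hV0, gaussianReal_zero_var]
  | succ n ih =>
    have hZn : Measurable (Z n) := (measurable_iSup_comap_of_rec hZ0 hZ n).mono
      (iSup₂_le fun i _ => (hζ i).comap_le) le_rfl
    have hlawZ := (gaussianReal_const_mul ⟨hZn.aemeasurable, ih⟩ (a n)).map_eq
    have hlawζ := (gaussianReal_const_mul ⟨(hζ (n + 1)).aemeasurable, hlaw (n + 1)⟩ (c n)).map_eq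
    have hsum := gaussianReal_add_gaussianReal_of_indepFun
      ((indepFun_of_rec hζ hind hZ0 hZ n).comp (measurable_const_mul (a n))
        (measurable_const_mul (c n))) hlawZ hlawζ
    rw [show Z (n + 1) = (a n * ·) ∘ Z n + (c n * ·) ∘ ζ (n + 1) from funext (hZ n),
      hsum, mul_zero, mul_zero, add_zero]
    congr 1
    rw [← NNReal.coe_inj]
    push_cast
    rw [Real.coe_toNNReal _ (nonneg_of_eq_sq_mul_add_sq hV0 hV _),
      Real.coe_toNNReal _ (nonneg_of_eq_sq_mul_add_sq hV0 hV _), hV, mul_one]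

end GaussianRecursion

section VarianceLimits

variable {a V : ℕ → ℝ}

lemma tendsto_zero_of_eq_sq_mul_add_sq (ha0 : ∀ n, 0 ≤ a n) (ha1 : ∀ n, a n ≤ 1)
    (hsum : Tendsto (fun n => ∑ i ∈ range n, a i) atTop atTop) (ha : Tendsto a atTop (𝓝 0))
    (hV0 : V 0 = 0) (hV : ∀ n, V (n + 1) = (1 - a n) ^ 2 * V n + a n ^ 2) :
    Tendsto V atTop (𝓝 0) := by
  have hVnn := nonneg_of_eq_sq_mul_add_sq hV0 hV
  refine tendsto_zero_of_le_one_sub_mul_add ha0 ha1 hsum ha hVnn fun n => ?_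
  have hsq : (1 - a n) ^ 2 ≤ 1 - a n := by nlinarith [ha0 n, ha1 n]
  rw [hV, ← sq]
  nlinarith [mul_le_mul_of_nonneg_right hsq (hVnn n)]

lemma tendsto_half_of_eq_sq_mul_add (ha0 : ∀ n, 0 ≤ a n) (ha1 : ∀ n, a n ≤ 1)
    (hsum : Tendsto (fun n => ∑ i ∈ range n, a i) atTop atTop) (ha : Tendsto a atTop (𝓝 0))
    (hV : ∀ n, V (n + 1) = (1 - a n) ^ 2 * V n + a n) :
    Tendsto V atTop (𝓝 (1 / 2)) := by
  rw [tendsto_iff_norm_sub_tendsto_zero]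
  refine tendsto_zero_of_le_one_sub_mul_add ha0 ha1 hsum (b := fun n => a n / 2)
    (by simpa using ha.div_const 2) (fun n => norm_nonneg _) fun n => ?_
  have hfix : V (n + 1) - 1 / 2 = (1 - a n) ^ 2 * (V n - 1 / 2) + a n * (a n / 2) := by
    rw [hV]; ring
  have hsq : (1 - a n) ^ 2 ≤ 1 - a n := by nlinarith [ha0 n, ha1 n]
  calc ‖V (n + 1) - 1 / 2‖ ≤ (1 - a n) ^ 2 * ‖V n - 1 / 2‖ + a n * (a n / 2) := by
        rw [hfix]
        refine (norm_add_le _ _).trans_eq ?_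
        have hrem : 0 ≤ a n * (a n / 2) := by have := ha0 n; positivity
        rw [norm_mul, Real.norm_of_nonneg (sq_nonneg (1 - a n)), Real.norm_of_nonneg hrem]
    _ ≤ (1 - a n) * ‖V n - 1 / 2‖ + a n * (a n / 2) := by gcongr

end VarianceLimits

theorem sgld_vs_pgd_quadratic_limit_general
    {Ω : Type} [MeasurableSpace Ω] (P : Measure Ω) [IsProbabilityMeasure P]
    (η : ℕ → ℝ) (hηpos : ∀ n, 0 < η n) (hη1 : ∀ n, η n < 1)
    (hlim : Tendsto η atTop (nhds 0))
    (hdiv : Tendsto (fun n => ∑ i ∈ Finset.range n, η (i + 1)) atTop atTop)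
    (ζ : ℕ → Ω → ℝ) (hζme : ∀ n, Measurable (ζ n))
    (hζlaw : ∀ n, Measure.map (ζ n) P = gaussianReal 0 1)
    (hζind : iIndepFun ζ P)
    (X Y : ℕ → Ω → ℝ)
    (hX0 : ∀ ω, X 0 ω = 0) (hY0 : ∀ ω, Y 0 ω = 0)
    (hXrec : ∀ n ω, X (n + 1) ω
        = (1 - η (n + 1)) * X n ω + Real.sqrt (η (n + 1)) * ζ (n + 1) ω)
    (hYrec : ∀ n ω, Y (n + 1) ω = (1 - η (n + 1)) * Y n ω + η (n + 1) * ζ (n + 1) ω)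
    (Vx Vy : ℕ → ℝ) (hVx0 : Vx 0 = 0) (hVy0 : Vy 0 = 0)
    (hVxrec : ∀ n, Vx (n + 1) = (1 - η (n + 1)) ^ 2 * Vx n + η (n + 1))
    (hVyrec : ∀ n, Vy (n + 1) = (1 - η (n + 1)) ^ 2 * Vy n + η (n + 1) ^ 2) :
    (∀ n, Measure.map (X n) P = gaussianReal 0 (Vx n).toNNReal) ∧
    (∀ n, Measure.map (Y n) P = gaussianReal 0 (Vy n).toNNReal) ∧
    Tendsto Vx atTop (nhds (1 / 2)) ∧ Tendsto Vy atTop (nhds 0) := by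
  have hη0 : ∀ n, 0 ≤ η (n + 1) := fun n => (hηpos _).le
  have hη1' : ∀ n, η (n + 1) ≤ 1 := fun n => (hη1 _).le
  have hlim' : Tendsto (fun n => η (n + 1)) atTop (𝓝 0) := hlim.comp (tendsto_add_atTop_nat 1)
  have hVxrec' : ∀ n, Vx (n + 1) = (1 - η (n + 1)) ^ 2 * Vx n + √(η (n + 1)) ^ 2 := fun n => by
    rw [hVxrec, sq_sqrt (hη0 n)]
  exact ⟨map_eq_gaussianReal_of_rec hζme hζlaw hζind hX0 hXrec hVx0 hVxrec',
    map_eq_gaussianReal_of_rec hζme hζlaw hζind hY0 hYrec hVy0 hVyrec,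
    tendsto_half_of_eq_sq_mul_add hη0 hη1' hdiv hlim' hVxrec,
    tendsto_zero_of_eq_sq_mul_add_sq hη0 hη1' hdiv hlim' hVy0 hVyrec⟩

/-- Limiting distributions of SGLD versus perturbed gradient descent on the quadratic
`F(x) = x²/2` (Lemma 5.2): with decreasing steps `η_n → 0`, `Σ η_n = ∞`, i.i.d. standard
Gaussians `ζ_n`, and recursions `X_n = (1−η_n)X_{n−1} + √η_n ζ_n`,
`Y_n = (1−η_n)Y_{n−1} + η_n ζ_n` started at `0`, the iterates are centered Gaussians whose
variances satisfy `V_n^x = (1−η_n)²V_{n−1}^x + η_n → 1/2` and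
`V_n^y = (1−η_n)²V_{n−1}^y + η_n² → 0`; hence `X_n ⇒ N(0,1/2)` and `Y_n ⇒ δ₀`. -/
theorem sgld_vs_pgd_quadratic_limit
    {Ω : Type} [MeasurableSpace Ω] (P : Measure Ω) [IsProbabilityMeasure P]
    (η : ℕ → ℝ) (hηpos : ∀ n, 0 < η n) (hη1 : ∀ n, η n < 1)
    (hanti : Antitone η) (hlim : Tendsto η atTop (nhds 0))
    (hdiv : Tendsto (fun n => ∑ i ∈ Finset.range n, η (i + 1)) atTop atTop)
    (ζ : ℕ → Ω → ℝ) (hζme : ∀ n, Measurable (ζ n))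
    (hζlaw : ∀ n, Measure.map (ζ n) P = gaussianReal 0 1)
    (hζind : iIndepFun ζ P)
    (X Y : ℕ → Ω → ℝ)
    (hX0 : ∀ ω, X 0 ω = 0) (hY0 : ∀ ω, Y 0 ω = 0)
    (hXrec : ∀ n ω, X (n + 1) ω
        = (1 - η (n + 1)) * X n ω + Real.sqrt (η (n + 1)) * ζ (n + 1) ω)
    (hYrec : ∀ n ω, Y (n + 1) ω = (1 - η (n + 1)) * Y n ω + η (n + 1) * ζ (n + 1) ω)
    (Vx Vy : ℕ → ℝ) (hVx0 : Vx 0 = 0) (hVy0 : Vy 0 = 0)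
    (hVxrec : ∀ n, Vx (n + 1) = (1 - η (n + 1)) ^ 2 * Vx n + η (n + 1))
    (hVyrec : ∀ n, Vy (n + 1) = (1 - η (n + 1)) ^ 2 * Vy n + η (n + 1) ^ 2) :
    (∀ n, Measure.map (X n) P = gaussianReal 0 (Vx n).toNNReal) ∧
    (∀ n, Measure.map (Y n) P = gaussianReal 0 (Vy n).toNNReal) ∧
    Tendsto Vx atTop (nhds (1 / 2)) ∧ Tendsto Vy atTop (nhds 0) :=
  sgld_vs_pgd_quadratic_limit_general P η hηpos hη1 hlim hdiv ζ hζme hζlaw hζind X Y hX0 hY0 hXrec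
    hYrec Vx Vy hVx0 hVy0 hVxrec hVyrec
end
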